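/- Let P be a strictly positive joint distribution over finite-valued random variables X = (X1, X2), and suppose P is a PMN with respect to a graph G. Then for every X_u ∈ X1, X_u is conditionally independent of the set (X2 \ X_{N(u)}) given X1 ∪ X_{N(u)} \ X_u, i.e., X_u ⫫ (X_{\N(u)} ∩ X2) | (X1 ∪ X_{N(u)}) \ X_u. -/

import Mathlib

open Finset

variable {ι V : Type*}

/-- The marginal probability `P(X_A = x_A)`. -/
noncomputable def margin [Fintype ι] [Fintype V] [DecidableEq ι] [DecidableEq V]
    (P : (ι → V) → ℝ) (A : Finset ι) (x : ι → V) : ℝ :=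
  ∑ y ∈ Finset.univ.filter (fun y : ι → V => ∀ i ∈ A, y i = x i), P y

/-- `P` is a partitioned Markov network w.r.t. `G` for the partition `(X1, X1ᶜ)`. -/
noncomputable def IsPMN [Fintype ι] [Fintype V] [DecidableEq ι] [DecidableEq V]
    (P : (ι → V) → ℝ) (G : SimpleGraph ι) [DecidableRel G.Adj] (X1 : Finset ι) : Prop :=
  (∀ i ∈ X1, ∀ x : ι → V,
      margin P (insert i ((X1 ∪ G.neighborFinset i).erase i)) x
          / margin P ((X1 ∪ G.neighborFinset i).erase i) x
        = P x / margin P (Finset.univ.erase i) x) ∧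
  (∀ i ∈ X1ᶜ, ∀ x : ι → V,
      margin P (insert i ((X1ᶜ ∪ G.neighborFinset i).erase i)) x
          / margin P ((X1ᶜ ∪ G.neighborFinset i).erase i) x
        = P x / margin P (Finset.univ.erase i) x)

theorem margin_univ [Fintype ι] [Fintype V] [DecidableEq ι] [DecidableEq V]
    (P : (ι → V) → ℝ) (x : ι → V) : margin P univ x = P x := by
  have : univ.filter (fun y : ι → V => ∀ i ∈ (univ : Finset ι), y i = x i) = {x} := by
    ext y
    simp [funext_iff]
  rw [margin, this, sum_singleton]

theorem margin_pos [Fintype ι] [Fintype V] [DecidableEq ι] [DecidableEq V]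
    {P : (ι → V) → ℝ} (hpos : ∀ x, 0 < P x) (A : Finset ι) (x : ι → V) :
    0 < margin P A x :=
  sum_pos (fun y _ => hpos y) ⟨x, by simp⟩

theorem erase_union_union_compl_sdiff [Fintype ι] [DecidableEq ι] {S : Finset ι}
    (T : Finset ι) {u : ι} (hu : u ∈ S) :
    (S ∪ T).erase u ∪ (Sᶜ \ T) = univ.erase u := by
  ext i
  by_cases hi : i = u
  · subst hi
    simp [hu]
  · by_cases hS : i ∈ S <;> by_cases hT : i ∈ T <;> simp [hi, hS, hT]

theorem pmn_local_condIndep_general [Fintype ι] [Fintype V] [DecidableEq ι] [DecidableEq V]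
    (P : (ι → V) → ℝ) (hpos : ∀ x, 0 < P x)
    (G : SimpleGraph ι) [DecidableRel G.Adj]
    (X1 : Finset ι) (hPMN : IsPMN P G X1)
    (u : ι) (hu : u ∈ X1) :
    ∀ x : ι → V,
      margin P (((X1 ∪ G.neighborFinset u).erase u ∪ {u}) ∪ (X1ᶜ \ G.neighborFinset u)) x
          / margin P ((X1 ∪ G.neighborFinset u).erase u) x
        = (margin P (insert u ((X1 ∪ G.neighborFinset u).erase u)) x
              / margin P ((X1 ∪ G.neighborFinset u).erase u) x)
          * (margin P ((X1 ∪ G.neighborFinset u).erase u ∪ (X1ᶜ \ G.neighborFinset u)) x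
              / margin P ((X1 ∪ G.neighborFinset u).erase u) x) := by
  intro x
  -- Conditioning set and `X2 \ N(u)` together cover all but `u`, so the PMN property at `u`
  -- identifies the local conditional of `X_u` with its full conditional.
  have hrest := erase_union_union_compl_sdiff (G.neighborFinset u) hu
  have hrest_ne := (margin_pos hpos (univ.erase u) x).ne'
  have hcond_ne := (margin_pos hpos ((X1 ∪ G.neighborFinset u).erase u) x).ne'
  rw [union_right_comm, hrest, union_singleton, insert_erase (mem_univ u), margin_univ,
    hPMN.1 u hu x]
  field_simp

/-- If a strictly positive `P` is a PMN w.r.t. `G` then for every `u ∈ X1`, the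
variable `X_u` is conditionally independent of the set `X2 \ X_{N(u)}` given
`(X1 ∪ X_{N(u)}) \ X_u`. -/
theorem pmn_local_condIndep [Fintype ι] [Fintype V] [DecidableEq ι] [DecidableEq V]
    (P : (ι → V) → ℝ) (hpos : ∀ x, 0 < P x) (hsum : ∑ x : ι → V, P x = 1)
    (G : SimpleGraph ι) [DecidableRel G.Adj]
    (X1 : Finset ι) (hPMN : IsPMN P G X1)
    (u : ι) (hu : u ∈ X1) :
    ∀ x : ι → V,
      margin P (((X1 ∪ G.neighborFinset u).erase u ∪ {u}) ∪ (X1ᶜ \ G.neighborFinset u)) x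
          / margin P ((X1 ∪ G.neighborFinset u).erase u) x
        = (margin P (insert u ((X1 ∪ G.neighborFinset u).erase u)) x
              / margin P ((X1 ∪ G.neighborFinset u).erase u) x)
          * (margin P ((X1 ∪ G.neighborFinset u).erase u ∪ (X1ᶜ \ G.neighborFinset u)) x
              / margin P ((X1 ∪ G.neighborFinset u).erase u) x) :=
  pmn_local_condIndep_general P hpos G X1 hPMN u hu
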